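/- arXiv:2302.06668 — 2 statements merged into one kernel-verified Lean document; each statement's English description precedes it below -/
import Mathlib

section
/- Let f : [0,∞) → ℝ be continuous, let t* ∈ (0,∞) and ε₀ > 0 be such that f(t) > 0 for all t ∈ [0, t*) and f(t) < 0 for all t ∈ (t*, t* + ε₀). Let (wₙ) be a sequence of nonnegative functions wₙ : [0,∞) → ℝ≥0 and (τₙ) a sequence of points in [0,∞) such that wₙ(τₙ) = 0 for every n and sup_{t ∈ [0, τₙ]} |wₙ(t) − f(t)| → 0 as n → ∞. Then τₙ → t* as n → ∞. -/
open Filter Set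

/-- **Convergence of stopping times to a stable zero.**
If `f` is continuous on `[0,∞)`, positive on `[0, t*)` and negative on `(t*, t*+ε₀)`,
`wₙ` are nonnegative on `[0,∞)` with `wₙ(τₙ) = 0` and `sup_{[0,τₙ]} |wₙ - f| → 0`,
then `τₙ → t*`. (Deterministic core of Lemma 3.3.) -/
theorem stmt_1 (f : ℝ → ℝ) (hf : ContinuousOn f (Set.Ici 0))
    (tstar ε₀ : ℝ) (htstar_pos : 0 < tstar) (hε₀ : 0 < ε₀)
    (hpos : ∀ t, 0 ≤ t → t < tstar → 0 < f t)
    (hneg : ∀ t, tstar < t → t < tstar + ε₀ → f t < 0)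
    (w : ℕ → ℝ → ℝ) (hw_nonneg : ∀ n t, 0 ≤ t → 0 ≤ w n t)
    (τ : ℕ → ℝ) (hτ_nonneg : ∀ n, 0 ≤ τ n) (hzero : ∀ n, w n (τ n) = 0)
    (hconv : ∀ ε > (0:ℝ), ∀ᶠ n in atTop, ∀ t ∈ Set.Icc (0:ℝ) (τ n), |w n t - f t| < ε) :
    Tendsto τ atTop (nhds tstar) := by
  rw [Metric.tendsto_nhds]
  intro ε hε
  set ε' : ℝ := min ε (min (ε₀ / 2) tstar) with hε'def
  have hε'pos : 0 < ε' := lt_min hε (lt_min (by linarith) htstar_pos)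
  have hε'le : ε' ≤ ε := min_le_left _ _
  have hε'le2 : ε' ≤ ε₀ / 2 := le_trans (min_le_right _ _) (min_le_left _ _)
  have hε'le3 : ε' ≤ tstar := le_trans (min_le_right _ _) (min_le_right _ _)
  -- min of f on [0, tstar - ε']
  have hKsub : Set.Icc (0:ℝ) (tstar - ε') ⊆ Set.Ici 0 := fun x hx => hx.1
  have hKne : (Set.Icc (0:ℝ) (tstar - ε')).Nonempty := ⟨0, le_refl _, by linarith⟩
  obtain ⟨c, hcK, hcmin⟩ := isCompact_Icc.exists_isMinOn hKne (hf.mono hKsub)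
  have hm : 0 < f c := hpos c hcK.1 (by have := hcK.2; linarith)
  -- negative value at s
  set s : ℝ := tstar + ε' / 2 with hsdef
  have hfs : f s < 0 := hneg s (by simp [hsdef]; linarith) (by simp [hsdef]; linarith)
  set δ : ℝ := min (f c) (-f s) with hδdef
  have hδpos : 0 < δ := lt_min hm (by linarith)
  clear_value ε' s δ
  filter_upwards [hconv δ hδpos] with n hn
  have h1 : tstar - ε' < τ n := by
    by_contra h
    push_neg at h
    have hτK : τ n ∈ Set.Icc (0:ℝ) (tstar - ε') := ⟨hτ_nonneg n, h⟩
    have := hn (τ n) ⟨hτ_nonneg n, le_refl _⟩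
    rw [hzero n] at this
    have hfτ : f c ≤ f (τ n) := hcmin hτK
    rw [abs_sub_comm, abs_of_nonneg (by linarith)] at this
    have : δ ≤ f c := hδdef ▸ min_le_left _ _
    linarith [hn (τ n) ⟨hτ_nonneg n, le_refl _⟩]
  have h2 : τ n < tstar + ε' := by
    by_contra h
    push_neg at h
    have hsmem : s ∈ Set.Icc (0:ℝ) (τ n) := ⟨by linarith, by linarith⟩
    have := hn s hsmem
    have hws : 0 ≤ w n s := hw_nonneg n s (by linarith)
    have hδle : δ ≤ -f s := hδdef ▸ min_le_right _ _
    have habs : w n s - f s ≤ |w n s - f s| := le_abs_self _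
    linarith
  rw [Real.dist_eq, abs_sub_lt_iff]
  constructor <;> linarith
end

section
/- For d ∈ ℕ, z ∈ ℝ and ℓ ∈ ℕ define the binomial weight b(d,z,ℓ) := C(d,ℓ)·z^ℓ·(1−z)^{d−ℓ}. Let d ≥ 1 and let a₀, a₁, …, a_d be real constants with 0 ≤ a_θ ≤ 1 for all θ. Then for every y ∈ [0,1], the function y ↦ ∑_{θ=0}^{d} a_θ·b(d,y,θ) is differentiable and its derivative at y has absolute value at most 2d; in particular the derivative is at most 2d. -/
/-- The binomial weight `b(d,z,ℓ) = C(d,ℓ) z^ℓ (1-z)^{d-ℓ}`. -/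
noncomputable def binomWeight (d : ℕ) (z : ℝ) (ℓ : ℕ) : ℝ :=
  (d.choose ℓ : ℝ) * z ^ ℓ * (1 - z) ^ (d - ℓ)

lemma sum_binomWeight (n : ℕ) (y : ℝ) :
    ∑ k ∈ Finset.range (n + 1), (n.choose k : ℝ) * y ^ k * (1 - y) ^ (n - k) = 1 := by
  have h := add_pow y (1 - y) n
  calc ∑ k ∈ Finset.range (n + 1), (n.choose k : ℝ) * y ^ k * (1 - y) ^ (n - k)
      = ∑ k ∈ Finset.range (n + 1), y ^ k * (1 - y) ^ (n - k) * (n.choose k : ℝ) :=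
        Finset.sum_congr rfl (by intros; ring)
    _ = (y + (1 - y)) ^ n := h.symm
    _ = 1 := by norm_num

lemma nat_id (m θ : ℕ) (h : θ ≤ m) :
    (m + 1).choose θ * (m + 1 - θ) = (m + 1) * m.choose θ := by
  have h1 : (m + 1).choose θ = (m + 1).choose (m + 1 - θ) :=
    (Nat.choose_symm (by omega)).symm
  have h2 : m.choose θ = m.choose (m - θ) := (Nat.choose_symm h).symm
  have h3 := Nat.add_one_mul_choose_eq m (m - θ)
  have h4 : m - θ + 1 = m + 1 - θ := by omega
  rw [h1, h2, ← h4]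
  exact h3.symm

lemma hasDerivAt_bw (d θ : ℕ) (y : ℝ) :
    HasDerivAt (fun z => binomWeight d z θ)
      ((d.choose θ : ℝ) * ((θ : ℝ) * y ^ (θ - 1) * (1 - y) ^ (d - θ)
        - ((d - θ : ℕ) : ℝ) * y ^ θ * (1 - y) ^ (d - θ - 1))) y := by
  have h0 : HasDerivAt (fun z : ℝ => 1 - z) (-1) y := by
    simpa using (hasDerivAt_const y (1 : ℝ)).fun_sub (hasDerivAt_id y)
  have h1 : HasDerivAt (fun z : ℝ => (1 - z) ^ (d - θ))
      (-(((d - θ : ℕ) : ℝ) * (1 - y) ^ (d - θ - 1))) y := by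
    have := (hasDerivAt_pow (d - θ) (1 - y)).comp y h0
    simpa [mul_comm, Function.comp_def] using this
  have h2 := ((hasDerivAt_pow θ y).fun_mul h1).const_mul (d.choose θ : ℝ)
  simp only [binomWeight, mul_assoc]
  exact h2.congr_deriv (by ring)

/-- **Uniform derivative bound for coefficient-weighted binomial sums.**
If `0 ≤ a_θ ≤ 1` for all `θ ≤ d`, then for `y ∈ [0,1]` the function
`y ↦ ∑_{θ=0}^d a_θ b(d,y,θ)` is differentiable at `y` with `|derivative| ≤ 2d`,
in particular the derivative is at most `2d`. (Equation (eq:deriv) of Theorem 3.6.) -/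
theorem stmt_12 (d : ℕ) (hd : 1 ≤ d) (a : ℕ → ℝ)
    (ha : ∀ θ ≤ d, 0 ≤ a θ ∧ a θ ≤ 1)
    (y : ℝ) (hy : y ∈ Set.Icc (0:ℝ) 1) :
    DifferentiableAt ℝ (fun y : ℝ => ∑ θ ∈ Finset.range (d + 1), a θ * binomWeight d y θ) y ∧
    |deriv (fun y : ℝ => ∑ θ ∈ Finset.range (d + 1), a θ * binomWeight d y θ) y| ≤ 2 * d ∧
    deriv (fun y : ℝ => ∑ θ ∈ Finset.range (d + 1), a θ * binomWeight d y θ) y ≤ 2 * d := by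
  obtain ⟨hy0, hy1⟩ := hy
  have hy1' : (0:ℝ) ≤ 1 - y := by linarith
  obtain ⟨m, rfl⟩ : ∃ m, d = m + 1 := ⟨d - 1, by omega⟩
  set d := m + 1 with hdm
  -- the derivative of each summand
  set D : ℕ → ℝ := fun θ =>
    (d.choose θ : ℝ) * ((θ : ℝ) * y ^ (θ - 1) * (1 - y) ^ (d - θ)
      - ((d - θ : ℕ) : ℝ) * y ^ θ * (1 - y) ^ (d - θ - 1)) with hD
  have hderiv : HasDerivAt
      (fun z : ℝ => ∑ θ ∈ Finset.range (d + 1), a θ * binomWeight d z θ)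
      (∑ θ ∈ Finset.range (d + 1), a θ * D θ) y :=
    HasDerivAt.fun_sum fun θ _ => (hasDerivAt_bw d θ y).const_mul (a θ)
  have hderiv_eq : deriv (fun z : ℝ => ∑ θ ∈ Finset.range (d + 1), a θ * binomWeight d z θ) y
      = ∑ θ ∈ Finset.range (d + 1), a θ * D θ := hderiv.deriv
  -- sum of the first parts
  have sumA : ∑ θ ∈ Finset.range (d + 1),
      (d.choose θ : ℝ) * ((θ : ℝ) * y ^ (θ - 1) * (1 - y) ^ (d - θ)) = d := by
    rw [Finset.sum_range_succ']
    have hstep : ∀ k ∈ Finset.range (m + 1),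
        (d.choose (k + 1) : ℝ) * (((k + 1 : ℕ) : ℝ) * y ^ (k + 1 - 1) * (1 - y) ^ (d - (k + 1)))
          = (d : ℝ) * ((m.choose k : ℝ) * y ^ k * (1 - y) ^ (m - k)) := by
      intro k _
      have hid : (d : ℝ) * (m.choose k : ℝ) = (d.choose (k + 1) : ℝ) * ((k + 1 : ℕ) : ℝ) := by
        have := Nat.add_one_mul_choose_eq m k
        exact_mod_cast congrArg (fun n : ℕ => (n : ℝ)) this
      have he : d - (k + 1) = m - k := by omega
      rw [he, Nat.add_sub_cancel]
      calc (d.choose (k + 1) : ℝ) * (((k + 1 : ℕ) : ℝ) * y ^ k * (1 - y) ^ (m - k))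
          = ((d.choose (k + 1) : ℝ) * ((k + 1 : ℕ) : ℝ)) * (y ^ k * (1 - y) ^ (m - k)) := by
            ring
        _ = ((d : ℝ) * (m.choose k : ℝ)) * (y ^ k * (1 - y) ^ (m - k)) := by rw [← hid]
        _ = (d : ℝ) * ((m.choose k : ℝ) * y ^ k * (1 - y) ^ (m - k)) := by ring
    rw [Finset.sum_congr rfl hstep, ← Finset.mul_sum, sum_binomWeight]
    simp
  -- sum of the second parts
  have sumB : ∑ θ ∈ Finset.range (d + 1),
      (d.choose θ : ℝ) * (((d - θ : ℕ) : ℝ) * y ^ θ * (1 - y) ^ (d - θ - 1)) = d := by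
    rw [Finset.sum_range_succ]
    have hstep : ∀ θ ∈ Finset.range (m + 1),
        (d.choose θ : ℝ) * (((d - θ : ℕ) : ℝ) * y ^ θ * (1 - y) ^ (d - θ - 1))
          = (d : ℝ) * ((m.choose θ : ℝ) * y ^ θ * (1 - y) ^ (m - θ)) := by
      intro θ hθ
      have hθm : θ ≤ m := by simpa [Nat.lt_succ_iff] using Finset.mem_range.mp hθ
      have hid : (d.choose θ : ℝ) * ((d - θ : ℕ) : ℝ) = (d : ℝ) * (m.choose θ : ℝ) := by
        have := nat_id m θ hθm
        exact_mod_cast congrArg (fun n : ℕ => (n : ℝ)) this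
      have he : d - θ - 1 = m - θ := by omega
      rw [he]
      calc (d.choose θ : ℝ) * (((d - θ : ℕ) : ℝ) * y ^ θ * (1 - y) ^ (m - θ))
          = ((d.choose θ : ℝ) * ((d - θ : ℕ) : ℝ)) * (y ^ θ * (1 - y) ^ (m - θ)) := by ring
        _ = ((d : ℝ) * (m.choose θ : ℝ)) * (y ^ θ * (1 - y) ^ (m - θ)) := by rw [hid]
        _ = (d : ℝ) * ((m.choose θ : ℝ) * y ^ θ * (1 - y) ^ (m - θ)) := by ring
    rw [Finset.sum_congr rfl hstep, ← Finset.mul_sum, sum_binomWeight]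
    simp
  -- bound each term
  have hbound : |∑ θ ∈ Finset.range (d + 1), a θ * D θ| ≤ 2 * d := by
    calc |∑ θ ∈ Finset.range (d + 1), a θ * D θ|
        ≤ ∑ θ ∈ Finset.range (d + 1), |a θ * D θ| := Finset.abs_sum_le_sum_abs _ _
      _ ≤ ∑ θ ∈ Finset.range (d + 1),
            ((d.choose θ : ℝ) * ((θ : ℝ) * y ^ (θ - 1) * (1 - y) ^ (d - θ))
              + (d.choose θ : ℝ) * (((d - θ : ℕ) : ℝ) * y ^ θ * (1 - y) ^ (d - θ - 1))) := by
          apply Finset.sum_le_sum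
          intro θ hθ
          have hθd : θ ≤ d := by
            have := Finset.mem_range.mp hθ; omega
          obtain ⟨ha0, ha1⟩ := ha θ hθd
          have hA : (0:ℝ) ≤ (θ : ℝ) * y ^ (θ - 1) * (1 - y) ^ (d - θ) := by
            positivity
          have hB : (0:ℝ) ≤ ((d - θ : ℕ) : ℝ) * y ^ θ * (1 - y) ^ (d - θ - 1) := by
            positivity
          have hC : (0:ℝ) ≤ (d.choose θ : ℝ) := by positivity
          rw [abs_mul]
          have h1 : |a θ| ≤ 1 := abs_le.mpr ⟨by linarith, ha1⟩
          have h2 : |D θ| ≤ (d.choose θ : ℝ) * ((θ : ℝ) * y ^ (θ - 1) * (1 - y) ^ (d - θ))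
              + (d.choose θ : ℝ) * (((d - θ : ℕ) : ℝ) * y ^ θ * (1 - y) ^ (d - θ - 1)) := by
            rw [hD]
            rw [abs_mul, abs_of_nonneg hC]
            have : |(θ : ℝ) * y ^ (θ - 1) * (1 - y) ^ (d - θ)
                - ((d - θ : ℕ) : ℝ) * y ^ θ * (1 - y) ^ (d - θ - 1)|
                ≤ (θ : ℝ) * y ^ (θ - 1) * (1 - y) ^ (d - θ)
                  + ((d - θ : ℕ) : ℝ) * y ^ θ * (1 - y) ^ (d - θ - 1) := by
              rw [abs_sub_le_iff]; constructor <;> nlinarith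
            nlinarith
          calc |a θ| * |D θ| ≤ 1 * |D θ| := by
                apply mul_le_mul_of_nonneg_right h1 (abs_nonneg _)
            _ = |D θ| := by ring
            _ ≤ _ := h2
      _ = (d : ℝ) + (d : ℝ) := by rw [Finset.sum_add_distrib, sumA, sumB]
      _ = 2 * d := by ring
  refine ⟨hderiv.differentiableAt, ?_, ?_⟩
  · rw [hderiv_eq]; exact hbound
  · rw [hderiv_eq]
    exact le_trans (le_abs_self _) hbound
end
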